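/- Let a ∈ (0,∞) and let S : ℝ → ℝ satisfy S(−x) = −S(x) and S(a+x) = −S(x) for all x ∈ [0,∞), together with S(t) < t for all t ∈ (0,∞). Then for all x ∈ (a,∞), the strict inequality (a² − x²)/(a² + x²) < S(x)/x holds. -/

import Mathlib

open Real Set

lemma sub_lt_of_antiperiodic_of_lt_self {a : ℝ} {S : ℝ → ℝ}
    (hanti : ∀ x ∈ Ici (0:ℝ), S (a + x) = -S x) (hlt : ∀ t : ℝ, 0 < t → S t < t)
    {x : ℝ} (hax : a < x) : a - x < S x := by
  have hshift : S x = -S (x - a) := by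
    simpa using hanti (x - a) (sub_nonneg.mpr hax.le)
  have hbound : S (x - a) < x - a := hlt _ (sub_pos.mpr hax)
  linarith

lemma sq_sub_sq_div_sq_add_sq_lt_sub_div {a x : ℝ} (ha : 0 < a) (hax : a < x) :
    (a ^ 2 - x ^ 2) / (a ^ 2 + x ^ 2) < (a - x) / x := by
  have hx : 0 < x := ha.trans hax
  rw [div_lt_div_iff₀ (by positivity) hx]
  -- the difference of the two sides is `a (x - a)²`
  nlinarith [mul_pos ha (pow_pos (sub_pos.mpr hax) 2)]

theorem redheffer_beyond_period (a : ℝ) (ha : 0 < a) (S : ℝ → ℝ)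
    (hanti : ∀ x ∈ Ici (0:ℝ), S (a + x) = -S x)
    (hlt : ∀ t : ℝ, 0 < t → S t < t) :
    ∀ x ∈ Ioi a, (a ^ 2 - x ^ 2) / (a ^ 2 + x ^ 2) < S x / x := by
  intro x (hax : a < x)
  calc (a ^ 2 - x ^ 2) / (a ^ 2 + x ^ 2) < (a - x) / x :=
        sq_sub_sq_div_sq_add_sq_lt_sub_div ha hax
    _ < S x / x :=
        div_lt_div_of_pos_right (sub_lt_of_antiperiodic_of_lt_self hanti hlt hax) (ha.trans hax)
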